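/- Let n be a positive integer, let K ⊆ ℝⁿ be a convex set with √n·B₂ⁿ ⊆ K, let ν be a Borel probability measure on ℝⁿ supported on K, and let μ = γ_n * ν be the convolution of the standard Gaussian measure γ_n on ℝⁿ with ν. Then μ(4K) ≥ γ_n(2√n·B₂ⁿ) ≥ 1/2. -/

import Mathlib

open MeasureTheory Metric Set
open scoped Pointwise
open scoped MeasureTheory

/-- The standard Gaussian probability measure `γ_n` on `ℝⁿ`
(with density `(2π)^{−n/2} e^{−|x|²/2}`). -/
noncomputable def gaussianMeasure (n : ℕ) : Measure (EuclideanSpace ℝ (Fin n)) :=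
  Measure.map (MeasurableEquiv.toLp 2 (Fin n → ℝ))
    (Measure.pi fun _ => ProbabilityTheory.gaussianReal 0 1)

/-! Convexity and `0 ∈ K` give `2√n B₂ⁿ + K ⊆ 2K + 2K = 4K`, so the product set
`2√n B₂ⁿ × K`, of `γ_n ⊗ ν`-measure `γ_n(2√n B₂ⁿ)`, lies in the preimage of `4K` under addition.
For the second bound, `∫ |x|² dγ_n = n` and Chebyshev's inequality give
`γ_n(|x| > 2√n) ≤ 1/4`. -/

open ProbabilityTheory
open scoped RealInnerProductSpace

theorem MeasureTheory.Measure.mul_le_conv_add {M : Type*} [AddMonoid M] [MeasurableSpace M]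
    [MeasurableAdd₂ M] (μ ν : Measure M) [SFinite ν] (s t : Set M) :
    μ s * ν t ≤ (μ ∗ ν) (s + t) := by
  rw [← Measure.prod_prod]
  refine (measure_mono ?_).trans (Measure.le_map_apply (by fun_prop) _)
  rintro ⟨x, y⟩ ⟨hx, hy⟩
  exact add_mem_add hx hy

theorem Convex.subset_smul_of_zero_mem {E : Type*} [AddCommGroup E] [Module ℝ E] {K : Set E}
    (hK : Convex ℝ K) (h0 : 0 ∈ K) {t : ℝ} (ht : 1 ≤ t) : K ⊆ t • K := fun x hx =>
  ⟨t⁻¹ • x, hK.smul_mem_of_zero_mem h0 hx ⟨by positivity, inv_le_one_of_one_le₀ ht⟩,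
    smul_inv_smul₀ (by positivity) x⟩

theorem Convex.closedBall_add_subset_smul {E : Type*} [NormedAddCommGroup E] [NormedSpace ℝ E]
    {K : Set E} (hK : Convex ℝ K) {r : ℝ} (hr : 0 ≤ r) (hball : closedBall 0 r ⊆ K) {a b : ℝ}
    (ha : 0 ≤ a) (hb : 1 ≤ b) : closedBall 0 (a * r) + K ⊆ (a + b) • K := by
  have h0 : (0 : E) ∈ K := hball (mem_closedBall_self hr)
  calc closedBall 0 (a * r) + K = a • closedBall 0 r + K := by
        rw [smul_closedBall a (0 : E) hr, smul_zero, Real.norm_of_nonneg ha]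
    _ ⊆ a • K + b • K :=
        add_subset_add (smul_set_mono hball) (hK.subset_smul_of_zero_mem h0 hb)
    _ = (a + b) • K := (hK.add_smul ha (by linarith)).symm

theorem one_sub_div_sq_le_measureReal_closedBall {E : Type*} [NormedAddCommGroup E]
    [MeasurableSpace E] [OpensMeasurableSpace E] (μ : Measure E) [IsProbabilityMeasure μ]
    (hμ : Integrable (fun x => ‖x‖ ^ 2) μ) {r : ℝ} (hr : 0 < r) :
    1 - (∫ x, ‖x‖ ^ 2 ∂μ) / r ^ 2 ≤ μ.real (closedBall 0 r) := by
  have hmarkov := mul_meas_ge_le_integral_of_nonneg (ae_of_all _ fun x => by positivity) hμ (r ^ 2)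
  have htail : μ.real (closedBall 0 r)ᶜ ≤ μ.real {x | r ^ 2 ≤ ‖x‖ ^ 2} := by
    refine measureReal_mono fun x hx => ?_
    simp only [mem_compl_iff, mem_closedBall_zero_iff, not_le] at hx
    exact pow_le_pow_left₀ hr.le hx.le 2
  rw [measureReal_compl measurableSet_closedBall, probReal_univ] at htail
  rw [sub_le_comm, le_div_iff₀ (by positivity)]
  nlinarith

theorem integral_norm_sq_stdGaussian {E : Type*} [NormedAddCommGroup E] [InnerProductSpace ℝ E]
    [FiniteDimensional ℝ E] [MeasurableSpace E] [BorelSpace E] :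
    ∫ x, ‖x‖ ^ 2 ∂(stdGaussian E) = Module.finrank ℝ E := by
  set b := stdOrthonormalBasis ℝ E
  have hcoord : ∀ i, ∫ x, ⟪b i, x⟫ ^ 2 ∂(stdGaussian E) = 1 := fun i => by
    have hcov := covarianceBilin_apply IsGaussian.memLp_two_id (b i) (b i) (μ := stdGaussian E)
    rw [covarianceBilin_stdGaussian, innerSL_apply_apply ℝ, real_inner_self_eq_norm_sq,
      b.orthonormal.1 i] at hcov
    simpa [sq] using hcov.symm
  simp_rw [← b.sum_sq_inner_right]
  rw [integral_finsetSum _ fun i _ => ?_]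
  · simp [hcoord]
  · exact ((innerSL ℝ (b i)).comp_memLp' IsGaussian.memLp_two_id).integrable_sq

theorem gaussianMeasure_eq_stdGaussian (n : ℕ) :
    gaussianMeasure n = stdGaussian (EuclideanSpace ℝ (Fin n)) :=
  map_pi_eq_stdGaussian

/-- if `√n B₂ⁿ ⊆ K` with `K` convex, `ν` is a probability measure
supported on `K`, and `μ = γ_n ∗ ν`, then `μ(4K) ≥ γ_n(2√n B₂ⁿ) ≥ 1/2`. -/
theorem convolution_measure_of_dilate_ge :
    ∀ n : ℕ, 0 < n → ∀ K : Set (EuclideanSpace ℝ (Fin n)), Convex ℝ K →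
      closedBall 0 (Real.sqrt n) ⊆ K →
      ∀ ν : Measure (EuclideanSpace ℝ (Fin n)), IsProbabilityMeasure ν → ν Kᶜ = 0 →
        gaussianMeasure n (closedBall 0 (2 * Real.sqrt n)) ≤
            ((gaussianMeasure n) ∗ ν) ((4 : ℝ) • K) ∧
          ENNReal.ofReal (1 / 2) ≤
            gaussianMeasure n (closedBall 0 (2 * Real.sqrt n)) := by
  intro n hn K hK hball ν hν hνK
  rw [gaussianMeasure_eq_stdGaussian]
  set γ := stdGaussian (EuclideanSpace ℝ (Fin n))
  set B := closedBall (0 : EuclideanSpace ℝ (Fin n)) (2 * √n)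
  have hνK : ν K = 1 := by rw [measure_of_measure_compl_eq_zero hνK, measure_univ]
  have hBK : B + K ⊆ (4 : ℝ) • K := by
    simpa [show (4 : ℝ) = 2 + 2 by norm_num] using
      hK.closedBall_add_subset_smul (Real.sqrt_nonneg n) hball zero_le_two one_le_two
  refine ⟨?_, ?_⟩
  · calc γ B = γ B * ν K := by rw [hνK, mul_one]
      _ ≤ (γ ∗ ν) (B + K) := Measure.mul_le_conv_add γ ν B K
      _ ≤ (γ ∗ ν) ((4 : ℝ) • K) := measure_mono hBK
  · have hmoment : ∫ x, ‖x‖ ^ 2 ∂γ = n := by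
      rw [integral_norm_sq_stdGaussian, finrank_euclideanSpace_fin]
    have hchebyshev := one_sub_div_sq_le_measureReal_closedBall γ
      (IsGaussian.memLp_two_id.integrable_norm_pow' (p := 2)) (r := 2 * √n) (by positivity)
    rw [hmoment, mul_pow, Real.sq_sqrt n.cast_nonneg,
      show (n : ℝ) / (2 ^ 2 * n) = 1 / 4 by field_simp; norm_num] at hchebyshev
    rw [← ofReal_measureReal]
    exact ENNReal.ofReal_le_ofReal (by linarith)
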